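/- arXiv:2006.06879 — 8 statements merged into one kernel-verified Lean document; each statement's English description precedes it below -/
import Mathlib

section
/- Let F, G : ℝ → ℝ be strictly convex functions attaining global minima at x_F and x_G respectively, with x_F < x_G. For λ ∈ [0,1] let x_λ denote the unique global minimizer of H_λ(x) = λ F(x) + (1−λ) G(x) (which exists and lies in [x_F, x_G]). Then the map λ ↦ x_λ is (weakly) decreasing: if λ' > λ then x_{λ'} ≤ x_λ. -/
/-!
If `x_λ < x_λ'` for `λ < λ'`, then both points lie in `[x_F, x_G]`, where `F` is strictly
increasing and `G` strictly decreasing, so `F x_λ < F x_λ'` and `G x_λ' < G x_λ`. Adding the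
two minimality inequalities `H_λ x_λ ≤ H_λ x_λ'` and `H_λ' x_λ' ≤ H_λ' x_λ` gives
`(λ' - λ) ((F x_λ' - F x_λ) + (G x_λ - G x_λ')) ≤ 0`, a contradiction.
-/

open Set

namespace StrictConvexOn

variable {f : ℝ → ℝ} {x₀ : ℝ}

theorem strictMonoOn_Ici_of_forall_le (hf : StrictConvexOn ℝ univ f) (hmin : ∀ x, f x₀ ≤ f x) :
    StrictMonoOn f (Ici x₀) := by
  intro b hb a _ hba
  have hx₀a : x₀ < a := hba.trans_le' hb
  have below_right : ∀ z ∈ Ioo x₀ a, f z < f a := fun z hz =>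
    (hf.lt_on_openSegment trivial trivial hx₀a.ne (by rwa [openSegment_eq_Ioo hx₀a])).trans_le
      (max_le (hmin a) le_rfl)
  rcases (mem_Ici.1 hb).eq_or_lt with hb | hb
  · rw [← hb]
    exact (hmin _).trans_lt (below_right ((x₀ + a) / 2) ⟨by linarith, by linarith⟩)
  · exact below_right b ⟨hb, hba⟩

theorem strictAntiOn_Iic_of_forall_le (hf : StrictConvexOn ℝ univ f) (hmin : ∀ x, f x₀ ≤ f x) :
    StrictAntiOn f (Iic x₀) := by
  intro b _ a ha hba
  have hbx₀ : b < x₀ := hba.trans_le ha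
  have below_left : ∀ z ∈ Ioo b x₀, f z < f b := fun z hz =>
    (hf.lt_on_openSegment trivial trivial hbx₀.ne (by rwa [openSegment_eq_Ioo hbx₀])).trans_le
      (max_le le_rfl (hmin b))
  rcases (mem_Iic.1 ha).eq_or_lt with ha | ha
  · rw [ha]
    exact (hmin _).trans_lt (below_left ((b + x₀) / 2) ⟨by linarith, by linarith⟩)
  · exact below_left a ⟨hba, ha⟩

end StrictConvexOn

theorem stmt_1_general (F G : ℝ → ℝ) (xF xG : ℝ)
    (hF : StrictConvexOn ℝ Set.univ F) (hG : StrictConvexOn ℝ Set.univ G)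
    (hxF : ∀ x, F xF ≤ F x) (hxG : ∀ x, G xG ≤ G x)
    (xmin : ℝ → ℝ)
    (hmem : ∀ lam ∈ Set.Icc (0:ℝ) 1, xmin lam ∈ Set.Icc xF xG)
    (hmin : ∀ lam ∈ Set.Icc (0:ℝ) 1,
      ∀ y, lam * F (xmin lam) + (1 - lam) * G (xmin lam) ≤ lam * F y + (1 - lam) * G y) :
    ∀ lam ∈ Set.Icc (0:ℝ) 1, ∀ lam' ∈ Set.Icc (0:ℝ) 1,
      lam < lam' → xmin lam' ≤ xmin lam := by
  intro lam hlam lam' hlam' hlt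
  by_contra! hx
  have hF_lt : F (xmin lam) < F (xmin lam') :=
    hF.strictMonoOn_Ici_of_forall_le hxF (hmem lam hlam).1
      ((hmem lam hlam).1.trans hx.le) hx
  have hG_lt : G (xmin lam') < G (xmin lam) :=
    hG.strictAntiOn_Iic_of_forall_le hxG (hx.le.trans (hmem lam' hlam').2)
      (hmem lam' hlam').2 hx
  linarith [hmin lam hlam (xmin lam'), hmin lam' hlam' (xmin lam),
    mul_pos (sub_pos.2 hlt) (sub_pos.2 hF_lt), mul_pos (sub_pos.2 hlt) (sub_pos.2 hG_lt)]

theorem stmt_1 (F G : ℝ → ℝ) (xF xG : ℝ)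
    (hF : StrictConvexOn ℝ Set.univ F) (hG : StrictConvexOn ℝ Set.univ G)
    (hxF : ∀ x, F xF ≤ F x) (hxG : ∀ x, G xG ≤ G x) (hlt : xF < xG)
    (xmin : ℝ → ℝ)
    (hmem : ∀ lam ∈ Set.Icc (0:ℝ) 1, xmin lam ∈ Set.Icc xF xG)
    (hmin : ∀ lam ∈ Set.Icc (0:ℝ) 1,
      ∀ y, lam * F (xmin lam) + (1 - lam) * G (xmin lam) ≤ lam * F y + (1 - lam) * G y) :
    ∀ lam ∈ Set.Icc (0:ℝ) 1, ∀ lam' ∈ Set.Icc (0:ℝ) 1,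
      lam < lam' → xmin lam' ≤ xmin lam :=
  stmt_1_general F G xF xG hF hG hxF hxG xmin hmem hmin
end

section
/- Let l : ℝ → ℝ≥0 be strictly convex, and let μ be a probability measure on ℝ with continuous density f₀ supported on a compact interval I₀, with f₀ ≥ δ > 0 on a subinterval [l,u] ⊆ I₀ with l < t₀ < u. Define y(x) = sign(x − t₀). Then the function c ↦ E_{x∼μ}[ l( y(x) · (x − c) ) ] is strictly convex on ℝ. -/
/-!
For `c₁ ≠ c₂`, Jensen's defect `p F(c₁,x) + q F(c₂,x) - F(p c₁ + q c₂, x)` of the integrand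
`F(c,x) = l(sign(x - t₀)(x - c)) f₀(x)` is nonnegative everywhere, and it is positive wherever
`x ≠ t₀` and `f₀(x) > 0`, because `c ↦ sign(x - t₀)(x - c)` is then injective and affine.
The lower bound `f₀ ≥ δ` makes this set contain `(t₀, u)`, which has positive Lebesgue measure,
so the integrated defect is positive.
-/

open MeasureTheory Set

theorem Real.sign_monotone : Monotone Real.sign := by
  intro x y hxy
  rcases lt_trichotomy x 0 with hx | rfl | hx <;> rcases lt_trichotomy y 0 with hy | rfl | hy <;>
    simp [Real.sign_of_neg, Real.sign_of_pos, Real.sign_zero, *] <;> linarith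

theorem Real.abs_sign_mul_le (r x : ℝ) : |Real.sign r * x| ≤ |x| := by
  rw [abs_mul]
  rcases Real.sign_apply_eq r with h | h | h <;> simp [h]

theorem StrictConvexOn.comp_mul_add {𝕜 β : Type*} [Field 𝕜] [LinearOrder 𝕜] [IsStrictOrderedRing 𝕜]
    [AddCommMonoid β] [PartialOrder β] [SMul 𝕜 β] {f : 𝕜 → β}
    (hf : StrictConvexOn 𝕜 univ f) {a : 𝕜} (ha : a ≠ 0) (b : 𝕜) :
    StrictConvexOn 𝕜 univ fun c => f (a * c + b) := by
  refine ⟨convex_univ, fun x _ y _ hxy p q hp hq hpq => ?_⟩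
  have hne : a * x + b ≠ a * y + b := by simpa [ha] using hxy
  have hcombo : a * (p • x + q • y) + b = p • (a * x + b) + q • (a * y + b) := by
    simp only [smul_eq_mul]; linear_combination b * hpq.symm
  simpa only [hcombo] using hf.2 (mem_univ _) (mem_univ _) hne hp hq hpq

theorem StrictConvexOn.mul_const_of_pos {𝕜 E : Type*} [Field 𝕜] [LinearOrder 𝕜]
    [IsStrictOrderedRing 𝕜] [AddCommMonoid E] [Module 𝕜 E] {s : Set E} {f : E → 𝕜}
    (hf : StrictConvexOn 𝕜 s f) {w : 𝕜} (hw : 0 < w) : StrictConvexOn 𝕜 s fun c => f c * w := by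
  refine ⟨hf.1, fun x hx y hy hxy p q hp hq hpq => ?_⟩
  calc f (p • x + q • y) * w < (p • f x + q • f y) * w :=
        mul_lt_mul_of_pos_right (hf.2 hx hy hxy hp hq hpq) hw
    _ = p • (f x * w) + q • (f y * w) := by simp only [smul_eq_mul]; ring

theorem MeasureTheory.Integrable.bdd_mul_of_support_subset {α 𝕜 : Type*} [MeasurableSpace α]
    {μ : Measure α} [NormedRing 𝕜] {f g : α → 𝕜} {K : Set α} {C : ℝ} (hf : Integrable f μ)
    (hg : AEStronglyMeasurable g μ) (hgK : ∀ x ∈ K, ‖g x‖ ≤ C) (hfK : Function.support f ⊆ K) :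
    Integrable (fun x => g x * f x) μ := by
  refine (hf.norm.const_mul C).mono' (hg.mul hf.1) (Filter.Eventually.of_forall fun x => ?_)
  by_cases hx : x ∈ K
  · exact (norm_mul_le _ _).trans (mul_le_mul_of_nonneg_right (hgK x hx) (norm_nonneg _))
  · simp [Function.notMem_support.1 (fun h => hx (hfK h))]

theorem strictConvexOn_integral {α E : Type*} [MeasurableSpace α] {μ : Measure α}
    [AddCommGroup E] [Module ℝ E] {s : Set E} {F : E → α → ℝ}
    (hint : ∀ c ∈ s, Integrable (F c) μ) (hconv : ∀ x, ConvexOn ℝ s (F · x))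
    (hstrict : 0 < μ {x | StrictConvexOn ℝ s (F · x)}) :
    StrictConvexOn ℝ s fun c => ∫ x, F c x ∂μ := by
  obtain ⟨x₀, hx₀⟩ := nonempty_of_measure_ne_zero hstrict.ne'
  refine ⟨hx₀.1, fun c₁ h₁ c₂ h₂ hne p q hp hq hpq => ?_⟩
  set c := p • c₁ + q • c₂
  have hc : c ∈ s := hx₀.1 h₁ h₂ hp.le hq.le hpq
  have hint₁₂ : Integrable (fun x => p * F c₁ x + q * F c₂ x) μ :=
    ((hint c₁ h₁).const_mul p).add ((hint c₂ h₂).const_mul q)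
  set defect : α → ℝ := fun x => p * F c₁ x + q * F c₂ x - F c x
  have hdefect_nonneg : 0 ≤ defect := fun x => sub_nonneg.2 ((hconv x).2 h₁ h₂ hp.le hq.le hpq)
  have hdefect_pos : 0 < ∫ x, defect x ∂μ := by
    refine (integral_pos_iff_support_of_nonneg hdefect_nonneg (hint₁₂.sub (hint c hc))).2 ?_
    exact hstrict.trans_le <| measure_mono fun x hx => (sub_pos.2 (hx.2 h₁ h₂ hne hp hq hpq)).ne'
  rw [integral_sub hint₁₂ (hint c hc), integral_add ((hint c₁ h₁).const_mul p)
    ((hint c₂ h₂).const_mul q), integral_const_mul, integral_const_mul] at hdefect_pos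
  simp only [smul_eq_mul]
  linarith

section SignedLoss

variable {l f₀ : ℝ → ℝ} {a b t₀ : ℝ}

theorem integrable_loss_sign_mul_density (hl : Continuous l) (hf_cont : ContinuousOn f₀ (Icc a b))
    (hf_supp : ∀ x, x ∉ Icc a b → f₀ x = 0) (c : ℝ) :
    Integrable (fun x => l (Real.sign (x - t₀) * (x - c)) * f₀ x) := by
  have hsupp : Function.support f₀ ⊆ Icc a b := fun x hx => by_contra fun h => hx (hf_supp x h)
  have hf_int : Integrable f₀ := (integrableOn_iff_integrable_of_support_subset hsupp).1
    hf_cont.integrableOn_Icc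
  obtain ⟨R, hR⟩ := isCompact_Icc.exists_bound_of_continuousOn (continuous_sub_right c).continuousOn
  obtain ⟨C, hC⟩ := (isCompact_closedBall (0 : ℝ) R).exists_bound_of_continuousOn hl.continuousOn
  refine hf_int.bdd_mul_of_support_subset ?_ (fun x hx => hC _ ?_) hsupp
  · exact (hl.measurable.comp ((Real.sign_monotone.measurable.comp (measurable_sub_const t₀)).mul
      (measurable_sub_const c))).aestronglyMeasurable
  · rw [mem_closedBall_zero_iff]
    exact (Real.abs_sign_mul_le _ _).trans (hR x hx)

theorem convexOn_loss_sign_mul_density (hl : ConvexOn ℝ univ l) (hf_nonneg : ∀ x, 0 ≤ f₀ x)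
    (x : ℝ) : ConvexOn ℝ univ fun c => l (Real.sign (x - t₀) * (x - c)) * f₀ x := by
  refine ((hl.comp_affineMap (AffineMap.const ℝ ℝ (Real.sign (x - t₀) * x) -
    Real.sign (x - t₀) • AffineMap.id ℝ ℝ)).smul (hf_nonneg x)).congr fun c _ => ?_
  simp only [smul_eq_mul, Function.comp_apply, AffineMap.coe_sub, AffineMap.coe_smul,
    AffineMap.coe_const, AffineMap.coe_id, Pi.sub_apply, Pi.smul_apply, Function.const_apply, id]
  rw [mul_comm, mul_sub]

theorem strictConvexOn_loss_sign_mul_density (hl : StrictConvexOn ℝ univ l) {x : ℝ}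
    (hx : x ≠ t₀) (hfx : 0 < f₀ x) :
    StrictConvexOn ℝ univ fun c => l (Real.sign (x - t₀) * (x - c)) * f₀ x := by
  have hsign : -Real.sign (x - t₀) ≠ 0 := by
    simpa [Real.sign_eq_zero_iff, sub_eq_zero] using hx
  refine ((hl.comp_mul_add hsign (Real.sign (x - t₀) * x)).mul_const_of_pos hfx).congr
    fun c _ => ?_
  simp only [neg_mul, neg_add_eq_sub, mul_sub]

end SignedLoss

theorem stmt_3_general (l : ℝ → ℝ) (f₀ : ℝ → ℝ) (a b lo u δ t₀ : ℝ)
    (hl_convex : StrictConvexOn ℝ Set.univ l)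
    (hf_cont : ContinuousOn f₀ (Set.Icc a b))
    (hf_supp : ∀ x, x ∉ Set.Icc a b → f₀ x = 0)
    (hf_nonneg : ∀ x, 0 ≤ f₀ x)
    (hδ : 0 < δ) (hlo : lo < t₀) (hu : t₀ < u)
    (hf_lb : ∀ x ∈ Set.Icc lo u, δ ≤ f₀ x) :
    StrictConvexOn ℝ Set.univ
      (fun c => ∫ x, l (Real.sign (x - t₀) * (x - c)) * f₀ x) := by
  have hl_cont : Continuous l :=
    continuousOn_univ.1 (hl_convex.convexOn.continuousOn isOpen_univ)
  refine strictConvexOn_integral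
    (fun c _ => integrable_loss_sign_mul_density hl_cont hf_cont hf_supp c)
    (convexOn_loss_sign_mul_density hl_convex.convexOn hf_nonneg) ?_
  have hIoo : Ioo t₀ u ⊆ {x | StrictConvexOn ℝ univ
      fun c => l (Real.sign (x - t₀) * (x - c)) * f₀ x} := fun x hx =>
    strictConvexOn_loss_sign_mul_density hl_convex hx.1.ne'
      (hδ.trans_le (hf_lb x ⟨hlo.le.trans hx.1.le, hx.2.le⟩))
  refine lt_of_lt_of_le ?_ (measure_mono hIoo)
  simpa [Real.volume_Ioo] using hu

theorem stmt_3 (l : ℝ → ℝ) (f₀ : ℝ → ℝ) (a b lo u δ t₀ : ℝ)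
    (hl_convex : StrictConvexOn ℝ Set.univ l) (hl_nonneg : ∀ z, 0 ≤ l z)
    (hf_cont : ContinuousOn f₀ (Set.Icc a b))
    (hf_supp : ∀ x, x ∉ Set.Icc a b → f₀ x = 0)
    (hf_nonneg : ∀ x, 0 ≤ f₀ x)
    (hf_prob : ∫ x, f₀ x = 1)
    (hsub : Set.Icc lo u ⊆ Set.Icc a b)
    (hδ : 0 < δ) (hlo : lo < t₀) (hu : t₀ < u)
    (hf_lb : ∀ x ∈ Set.Icc lo u, δ ≤ f₀ x) :
    StrictConvexOn ℝ Set.univ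
      (fun c => ∫ x, l (Real.sign (x - t₀) * (x - c)) * f₀ x) :=
  stmt_3_general l f₀ a b lo u δ t₀ hl_convex hf_cont hf_supp hf_nonneg hδ hlo hu hf_lb
end

section
/- Let f₀, f₁ be continuous probability densities on ℝ supported on compact intervals, and suppose there exist l < t₀ < t₁ < u and δ > 0 with f₀(x), f₁(x) ≥ δ for all x ∈ [l,u]. Define Bias(c) = (F₀(max{c,t₀}) − F₀(min{c,t₀})) − (F₁(max{c,t₁}) − F₁(min{c,t₁})), where F₀, F₁ are the cumulative distribution functions. Then Bias is continuous, Bias(t₀) < 0, Bias(t₁) > 0, Bias is strictly increasing on [t₀, t₁], and there exists a unique c_fair ∈ (t₀, t₁) with Bias(c_fair) = 0. -/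
open MeasureTheory

/-- Cumulative distribution function of a density `f`. -/
noncomputable def cdf (f : ℝ → ℝ) (z : ℝ) : ℝ := ∫ x in Set.Iic z, f x

/-- Misclassification-probability difference between the two groups for
threshold `c`, with true thresholds `t₀` and `t₁`. -/
noncomputable def bias (f₀ f₁ : ℝ → ℝ) (t₀ t₁ c : ℝ) : ℝ :=
  (cdf f₀ (max c t₀) - cdf f₀ (min c t₀)) - (cdf f₁ (max c t₁) - cdf f₁ (min c t₁))

lemma integrable_of_supp {f : ℝ → ℝ} {a b : ℝ} (hc : Continuous f)
    (hs : ∀ x, x ∉ Set.Icc a b → f x = 0) : Integrable f := by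
  apply hc.integrable_of_hasCompactSupport
  apply HasCompactSupport.of_support_subset_isCompact (isCompact_Icc (a := a) (b := b))
  intro x hx
  by_contra hmem
  exact hx (hs x hmem)

lemma cdf_sub {f : ℝ → ℝ} (hf : Integrable f) (a b : ℝ) :
    cdf f b - cdf f a = ∫ x in a..b, f x :=
  intervalIntegral.integral_Iic_sub_Iic hf.integrableOn hf.integrableOn

lemma cdf_cont {f : ℝ → ℝ} (hf : Integrable f) : Continuous (cdf f) := by
  have h : cdf f = fun z => cdf f 0 + ∫ x in (0:ℝ)..z, f x := by
    funext z; rw [← cdf_sub hf 0 z]; ring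
  rw [h]
  exact continuous_const.add
    (intervalIntegral.continuous_primitive (fun a b => hf.intervalIntegrable) 0)

theorem stmt_4 (f₀ f₁ : ℝ → ℝ) (a₀ b₀ a₁ b₁ lo u δ t₀ t₁ : ℝ)
    (hf₀_cont : Continuous f₀) (hf₁_cont : Continuous f₁)
    (hf₀_nonneg : ∀ x, 0 ≤ f₀ x) (hf₁_nonneg : ∀ x, 0 ≤ f₁ x)
    (hf₀_prob : ∫ x, f₀ x = 1) (hf₁_prob : ∫ x, f₁ x = 1)
    (hf₀_supp : ∀ x, x ∉ Set.Icc a₀ b₀ → f₀ x = 0)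
    (hf₁_supp : ∀ x, x ∉ Set.Icc a₁ b₁ → f₁ x = 0)
    (hδ : 0 < δ) (h1 : lo < t₀) (h2 : t₀ < t₁) (h3 : t₁ < u)
    (hf₀_lb : ∀ x ∈ Set.Icc lo u, δ ≤ f₀ x)
    (hf₁_lb : ∀ x ∈ Set.Icc lo u, δ ≤ f₁ x) :
    Continuous (bias f₀ f₁ t₀ t₁) ∧
    bias f₀ f₁ t₀ t₁ t₀ < 0 ∧
    0 < bias f₀ f₁ t₀ t₁ t₁ ∧
    StrictMonoOn (bias f₀ f₁ t₀ t₁) (Set.Icc t₀ t₁) ∧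
    ∃! c, c ∈ Set.Ioo t₀ t₁ ∧ bias f₀ f₁ t₀ t₁ c = 0 := by
  have hi₀ : Integrable f₀ := integrable_of_supp hf₀_cont hf₀_supp
  have hi₁ : Integrable f₁ := integrable_of_supp hf₁_cont hf₁_supp
  -- continuity
  have hcont : Continuous (bias f₀ f₁ t₀ t₁) := by
    unfold bias
    have c0 := cdf_cont hi₀
    have c1 := cdf_cont hi₁
    fun_prop
  -- formula for bias on [t₀, t₁]
  have hform : ∀ c ∈ Set.Icc t₀ t₁,
      bias f₀ f₁ t₀ t₁ c = (∫ x in t₀..c, f₀ x) - ∫ x in c..t₁, f₁ x := by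
    rintro c ⟨hc1, hc2⟩
    unfold bias
    rw [max_eq_left hc1, min_eq_right hc1, max_eq_right hc2, min_eq_left hc2,
      cdf_sub hi₀, cdf_sub hi₁]
  -- positivity of integrals of f over subintervals of [t₀,t₁]
  have hpos : ∀ (f : ℝ → ℝ), Integrable f → (∀ x ∈ Set.Icc lo u, δ ≤ f x) →
      ∀ x y, t₀ ≤ x → x < y → y ≤ t₁ → 0 < ∫ z in x..y, f z := by
    intro f hf hlb x y hx hxy hy
    apply intervalIntegral.intervalIntegral_pos_of_pos_on hf.intervalIntegrable
    · intro z hz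
      exact lt_of_lt_of_le hδ (hlb z ⟨by linarith [hz.1], by linarith [hz.2]⟩)
    · exact hxy
  have ht₀mem : t₀ ∈ Set.Icc t₀ t₁ := ⟨le_refl _, h2.le⟩
  have ht₁mem : t₁ ∈ Set.Icc t₀ t₁ := ⟨h2.le, le_refl _⟩
  have hb0 : bias f₀ f₁ t₀ t₁ t₀ < 0 := by
    rw [hform t₀ ht₀mem]
    simp only [intervalIntegral.integral_same]
    have := hpos f₁ hi₁ hf₁_lb t₀ t₁ le_rfl h2 le_rfl
    linarith
  have hb1 : 0 < bias f₀ f₁ t₀ t₁ t₁ := by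
    rw [hform t₁ ht₁mem]
    simp only [intervalIntegral.integral_same]
    have := hpos f₀ hi₀ hf₀_lb t₀ t₁ le_rfl h2 le_rfl
    linarith
  have hmono : StrictMonoOn (bias f₀ f₁ t₀ t₁) (Set.Icc t₀ t₁) := by
    intro x hx y hy hxy
    rw [hform x hx, hform y hy]
    have A : (∫ z in t₀..x, f₀ z) + ∫ z in x..y, f₀ z = ∫ z in t₀..y, f₀ z :=
      intervalIntegral.integral_add_adjacent_intervals hi₀.intervalIntegrable
        hi₀.intervalIntegrable
    have B : (∫ z in x..y, f₁ z) + ∫ z in y..t₁, f₁ z = ∫ z in x..t₁, f₁ z :=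
      intervalIntegral.integral_add_adjacent_intervals hi₁.intervalIntegrable
        hi₁.intervalIntegrable
    have P0 := hpos f₀ hi₀ hf₀_lb x y hx.1 hxy hy.2
    have P1 := hpos f₁ hi₁ hf₁_lb x y hx.1 hxy hy.2
    linarith
  refine ⟨hcont, hb0, hb1, hmono, ?_⟩
  · have hivt : ∃ c ∈ Set.Icc t₀ t₁, bias f₀ f₁ t₀ t₁ c = 0 := by
      have := intermediate_value_Icc h2.le (hcont.continuousOn (s := Set.Icc t₀ t₁))
      exact (Set.mem_image _ _ _).mp (this ⟨hb0.le, hb1.le⟩) |>.imp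
        (fun c ⟨hc, he⟩ => ⟨hc, he⟩)
    obtain ⟨c, hc, hce⟩ := hivt
    have hcIoo : c ∈ Set.Ioo t₀ t₁ := by
      rcases eq_or_lt_of_le hc.1 with h | h
      · exact absurd (h ▸ hce) (by rw [← h] at hce; linarith [hb0, hce] : False).elim
      rcases eq_or_lt_of_le hc.2 with h' | h'
      · rw [h'] at hce; linarith
      · exact ⟨h, h'⟩
    refine ⟨c, ⟨hcIoo, hce⟩, ?_⟩
    rintro c' ⟨hc', hce'⟩
    exact hmono.injOn (Set.mem_Icc_of_Ioo hc') (Set.mem_Icc_of_Ioo hcIoo) (hce'.trans hce.symm)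
end

section
/- Let (λ_i) satisfy the recurrence λ_{i+1} = ((N+i)/(N+i+1)) λ_i + ((1−p)·1{λ_i ≤ λ*_U} + p λ*)/(N+i+1), with λ₀ = λ*, N ≥ 1, p ∈ [0,1], λ*, λ*_U ∈ (0,1). If 1 − p + p λ* ≤ λ*_U, then λ_i ≤ 1 − p + p λ* for all i, λ_i = (N/(N+i)) λ₀ + ((1−p)i)/(N+i) + (i/(N+i)) p λ*, and λ_i → 1 − p + p λ* as i → ∞. -/
/-! While `λ_i ≤ λ*_U` the indicator is `1`, and the recurrence is then exactly the update of a running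
mean that starts from `N` copies of `λ₀ = λ*` and adds one copy of `c = 1 - p + p λ*` per step. Since
`λ* ≤ c`, this mean stays below `c ≤ λ*_U`, so by induction the indicator is always `1`; the closed form
follows, and the mean tends to `c`. -/

open Filter Topology

noncomputable def runningMean (N x₀ a : ℝ) (i : ℕ) : ℝ :=
  N / (N + i) * x₀ + i / (N + i) * a

namespace runningMean

variable {N x₀ a : ℝ}

theorem zero (hN : N ≠ 0) : runningMean N x₀ a 0 = x₀ := by
  simp [runningMean, hN]

theorem succ (hN : 0 < N) (i : ℕ) :
    runningMean N x₀ a (i + 1) =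
      (N + i) / (N + i + 1) * runningMean N x₀ a i + a / (N + i + 1) := by
  have hi : (0 : ℝ) < N + i := by positivity
  unfold runningMean
  push_cast
  field_simp
  ring

theorem le_right (hN : 0 < N) (h : x₀ ≤ a) (i : ℕ) : runningMean N x₀ a i ≤ a := by
  have hi : (0 : ℝ) < N + i := by positivity
  calc runningMean N x₀ a i ≤ N / (N + i) * a + i / (N + i) * a := by
        unfold runningMean; gcongr
    _ = a := by field_simp

theorem tendsto : Tendsto (runningMean N x₀ a) atTop (𝓝 a) := by
  have hden : Tendsto (fun i : ℕ => N + i) atTop atTop :=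
    tendsto_atTop_add_const_left _ _ tendsto_natCast_atTop_atTop
  have hfirst : Tendsto (fun i : ℕ => N / (N + i)) atTop (𝓝 0) :=
    tendsto_const_nhds.div_atTop hden
  have hsecond : Tendsto (fun i : ℕ => (i : ℝ) / (N + i)) atTop (𝓝 1) := by
    simpa only [add_comm N] using tendsto_natCast_div_add_atTop N
  unfold runningMean
  simpa using (hfirst.mul_const x₀).add (hsecond.mul_const a)

end runningMean

theorem stmt_9_general (lam : ℕ → ℝ) (N : ℕ) (p lamStar lamU : ℝ)
    (hN : 1 ≤ N) (hp : p ∈ Set.Icc (0:ℝ) 1)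
    (hlamStar : lamStar ∈ Set.Ioo (0:ℝ) 1)
    (h0 : lam 0 = lamStar)
    (hrec : ∀ i : ℕ, lam (i + 1) =
      ((N + i : ℝ) / (N + i + 1)) * lam i
        + ((1 - p) * (if lam i ≤ lamU then (1:ℝ) else 0) + p * lamStar) / (N + i + 1))
    (hcase : 1 - p + p * lamStar ≤ lamU) :
    (∀ i : ℕ, lam i ≤ 1 - p + p * lamStar) ∧
    (∀ i : ℕ, lam i = ((N : ℝ) / (N + i)) * lam 0 + ((1 - p) * i) / (N + i)
        + ((i : ℝ) / (N + i)) * (p * lamStar)) ∧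
    Tendsto lam atTop (nhds (1 - p + p * lamStar)) := by
  set c := 1 - p + p * lamStar
  have hNpos : (0 : ℝ) < N := by exact_mod_cast hN
  -- `c - λ* = (1 - p) (1 - λ*)`
  have hstar_le : lamStar ≤ c := by nlinarith [hp.2, hlamStar.2]
  have hmean : ∀ i, lam i = runningMean N lamStar c i := by
    intro i
    induction i with
    | zero => rw [h0, runningMean.zero hNpos.ne']
    | succ i ih =>
      have hbelow : lam i ≤ lamU := ih ▸ (runningMean.le_right hNpos hstar_le i).trans hcase
      rw [hrec, if_pos hbelow, mul_one, ih, runningMean.succ hNpos]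
  refine ⟨fun i => hmean i ▸ runningMean.le_right hNpos hstar_le i, fun i => ?_, ?_⟩
  · rw [hmean i, h0, runningMean]
    ring
  · exact runningMean.tendsto.congr fun i => (hmean i).symm

theorem stmt_9 (lam : ℕ → ℝ) (N : ℕ) (p lamStar lamU : ℝ)
    (hN : 1 ≤ N) (hp : p ∈ Set.Icc (0:ℝ) 1)
    (hlamStar : lamStar ∈ Set.Ioo (0:ℝ) 1) (hlamU : lamU ∈ Set.Ioo (0:ℝ) 1)
    (h0 : lam 0 = lamStar)
    (hrec : ∀ i : ℕ, lam (i + 1) =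
      ((N + i : ℝ) / (N + i + 1)) * lam i
        + ((1 - p) * (if lam i ≤ lamU then (1:ℝ) else 0) + p * lamStar) / (N + i + 1))
    (hcase : 1 - p + p * lamStar ≤ lamU) :
    (∀ i : ℕ, lam i ≤ 1 - p + p * lamStar) ∧
    (∀ i : ℕ, lam i = ((N : ℝ) / (N + i)) * lam 0 + ((1 - p) * i) / (N + i)
        + ((i : ℝ) / (N + i)) * (p * lamStar)) ∧
    Tendsto lam atTop (nhds (1 - p + p * lamStar)) :=
  stmt_9_general lam N p lamStar lamU hN hp hlamStar h0 hrec hcase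
end

section
/- Let (λ_i) satisfy the recurrence λ_{i+1} = ((N+i)/(N+i+1)) λ_i + ((1−p)·1{λ_i ≤ λ*_U} + p λ*)/(N+i+1), with λ₀ = λ*, N ≥ 1, p ∈ [0,1], λ*, λ*_U ∈ (0,1). If p λ* > λ*_U, then λ_i > λ*_U for all i, λ_i = (N/(N+i)) λ₀ + (i/(N+i)) p λ*, and λ_i → p λ* as i → ∞. -/
open Filter

theorem stmt_10 (lam : ℕ → ℝ) (N : ℕ) (p lamStar lamU : ℝ)
    (hN : 1 ≤ N) (hp : p ∈ Set.Icc (0:ℝ) 1)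
    (hlamStar : lamStar ∈ Set.Ioo (0:ℝ) 1) (hlamU : lamU ∈ Set.Ioo (0:ℝ) 1)
    (h0 : lam 0 = lamStar)
    (hrec : ∀ i : ℕ, lam (i + 1) =
      ((N + i : ℝ) / (N + i + 1)) * lam i
        + ((1 - p) * (if lam i ≤ lamU then (1:ℝ) else 0) + p * lamStar) / (N + i + 1))
    (hcase : lamU < p * lamStar) :
    (∀ i : ℕ, lamU < lam i) ∧
    (∀ i : ℕ, lam i = ((N : ℝ) / (N + i)) * lam 0 + ((i : ℝ) / (N + i)) * (p * lamStar)) ∧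
    Tendsto lam atTop (nhds (p * lamStar)) := by
  have hNpos : (0:ℝ) < N := by exact_mod_cast hN
  have hden : ∀ i : ℕ, (0:ℝ) < (N:ℝ) + i := fun i => by positivity
  have hps_le : p * lamStar ≤ lamStar := by
    nlinarith [hp.2, hlamStar.1.le]
  -- closed form implies lamU < lam i
  have hlow : ∀ i : ℕ, lam i = ((N : ℝ) / (N + i)) * lam 0 + ((i : ℝ) / (N + i)) * (p * lamStar) → lamU < lam i := by
    intro i hform
    rw [hform, h0]
    have h1 : ((N : ℝ) / (N + i)) * lamStar ≥ ((N : ℝ) / (N + i)) * (p * lamStar) := by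
      apply mul_le_mul_of_nonneg_left hps_le
      positivity
    have h2 : ((N : ℝ) / (N + i)) * (p * lamStar) + ((i : ℝ) / (N + i)) * (p * lamStar)
        = p * lamStar := by
      field_simp
    nlinarith [h1, h2]
  have hform : ∀ i : ℕ, lam i = ((N : ℝ) / (N + i)) * lam 0 + ((i : ℝ) / (N + i)) * (p * lamStar) := by
    intro i
    induction i with
    | zero =>
      simp [hNpos.ne']
    | succ n ih =>
      have hgt := hlow n ih
      have hif : (if lam n ≤ lamU then (1:ℝ) else 0) = 0 := by
        rw [if_neg (not_le.mpr hgt)]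
      rw [hrec n, hif, ih]
      have d1 : ((N:ℝ) + n) ≠ 0 := (hden n).ne'
      have d2 : ((N:ℝ) + n + 1) ≠ 0 := by positivity
      push_cast
      field_simp
      ring
  refine ⟨fun i => hlow i (hform i), hform, ?_⟩
  have key : Tendsto (fun i : ℕ => p * lamStar + ((N:ℝ) / (N + i)) * (lam 0 - p * lamStar)) atTop (nhds (p * lamStar)) := by
    have hd : Tendsto (fun i : ℕ => ((N:ℝ) + i)) atTop atTop := by
      apply tendsto_atTop_add_const_left
      exact tendsto_natCast_atTop_atTop
    have : Tendsto (fun i : ℕ => (N:ℝ) / (N + i)) atTop (nhds 0) :=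
      Tendsto.div_atTop tendsto_const_nhds hd
    have := (this.mul_const (lam 0 - p * lamStar)).const_add (p * lamStar)
    simpa using this
  apply key.congr
  intro i
  rw [hform i]
  have d1 : ((N:ℝ) + i) ≠ 0 := (hden i).ne'
  field_simp
  ring
end

section
/- Let (λ_i) satisfy λ_{i+1} = ((N+i)/(N+i+1)) λ_i + ((1−p)·1{λ_i ≤ λ*_U} + p λ*)/(N+i+1), with λ₀ = λ*, N ≥ 1, p ∈ [0,1], λ*, λ*_U ∈ (0,1). If p λ* ≤ λ*_U < 1 − p + p λ*, then λ_i → λ*_U as i → ∞. -/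
open Filter

theorem stmt_11 (lam : ℕ → ℝ) (N : ℕ) (p lamStar lamU : ℝ)
    (hN : 1 ≤ N) (hp : p ∈ Set.Icc (0:ℝ) 1)
    (hlamStar : lamStar ∈ Set.Ioo (0:ℝ) 1) (hlamU : lamU ∈ Set.Ioo (0:ℝ) 1)
    (h0 : lam 0 = lamStar)
    (hrec : ∀ i : ℕ, lam (i + 1) =
      ((N + i : ℝ) / (N + i + 1)) * lam i
        + ((1 - p) * (if lam i ≤ lamU then (1:ℝ) else 0) + p * lamStar) / (N + i + 1))
    (hcase₁ : p * lamStar ≤ lamU) (hcase₂ : lamU < 1 - p + p * lamStar) :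
    Tendsto lam atTop (nhds lamU) := by
  obtain ⟨hp0, hp1⟩ := hp
  obtain ⟨hlS0, hlS1⟩ := hlamStar
  obtain ⟨hlU0, hlU1⟩ := hlamU
  have hN1 : (1:ℝ) ≤ (N:ℝ) := by exact_mod_cast hN
  have key : ∀ i : ℕ, |lam i - lamU| ≤ (N:ℝ) / (N + i) := by
    intro i
    induction i with
    | zero =>
      have h1 : |lam 0 - lamU| ≤ 1 := by
        rw [abs_le, h0]; constructor <;> nlinarith
      have h2 : |lam 0 - lamU| ≤ (N:ℝ)/(N + (0:ℕ)) := by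
        push_cast
        rw [add_zero, div_self (by linarith : (N:ℝ) ≠ 0)]
        exact h1
      exact h2
    | succ i ih =>
      have hn0 : (0:ℝ) < (N:ℝ) + i := by positivity
      have hn1 : (0:ℝ) < (N:ℝ) + i + 1 := by positivity
      have hup : ((N:ℝ) + i) * (lam i - lamU) ≤ N := by
        have := (abs_le.mp ih).2
        calc ((N:ℝ) + i) * (lam i - lamU) ≤ ((N:ℝ) + i) * ((N:ℝ)/(N+i)) := by
              exact mul_le_mul_of_nonneg_left this hn0.le
          _ = N := by field_simp
      have hlo : -(N:ℝ) ≤ ((N:ℝ) + i) * (lam i - lamU) := by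
        have := (abs_le.mp ih).1
        have h2 : ((N:ℝ) + i) * (-((N:ℝ)/(N+i))) ≤ ((N:ℝ)+i) * (lam i - lamU) :=
          mul_le_mul_of_nonneg_left this hn0.le
        calc -(N:ℝ) = ((N:ℝ) + i) * (-((N:ℝ)/(N+i))) := by field_simp
          _ ≤ _ := h2
      have hrw : lam (i+1) - lamU =
          (((N:ℝ) + i) * (lam i - lamU) +
            ((1 - p) * (if lam i ≤ lamU then (1:ℝ) else 0) + p * lamStar - lamU))
            / ((N:ℝ) + i + 1) := by
        rw [hrec i]; field_simp; ring
      have hbound : |lam (i+1) - lamU| ≤ (N:ℝ) / ((N:ℝ) + i + 1) := by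
        rw [hrw, abs_div, abs_of_pos hn1, div_le_div_iff_of_pos_right hn1, abs_le]
        by_cases hc : lam i ≤ lamU
        · simp only [if_pos hc]
          have hne : ((N:ℝ) + i) * (lam i - lamU) ≤ 0 := by nlinarith
          constructor <;> nlinarith
        · simp only [if_neg hc]
          push_neg at hc
          have hpos : 0 ≤ ((N:ℝ) + i) * (lam i - lamU) := by nlinarith
          constructor <;> nlinarith
      have : ((N:ℝ) + i + 1) = ((N:ℝ) + (i+1:ℕ)) := by push_cast; ring
      rwa [this] at hbound
  have hg : Tendsto (fun i : ℕ => (N:ℝ) / (N + i)) atTop (nhds 0) := by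
    apply Tendsto.div_atTop (tendsto_const_nhds)
    exact tendsto_atTop_add_const_left _ _ tendsto_natCast_atTop_atTop
  have h1 : Tendsto (fun i => lam i - lamU) atTop (nhds 0) :=
    squeeze_zero_norm (fun i => key i) hg
  have := h1.add_const lamU
  simpa using this
end

section
/- Let E(c) = λ E₀(c) + (1−λ) E₁(c) where E₀, E₁ are the expected hinge losses of threshold c for two uniform-density groups with thresholds t₀ < t₁ as in the uniform example (α₀+1 < α₁+1 < t₀−1 < t₀+1 < t₁−1 < t₁+1 < β₀−1 < β₁−1), with weights w₀, w₁. For every λ ∈ [0,1], E has a unique global minimizer c(λ), and c(λ) ∈ [t₀, t₁]. -/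
/-!
For `α ≤ t ≤ β` the expected hinge loss has the closed form
`w/2 ((t+1-c)₊² + (c+1-t)₊² - (α+1-c)₊² - (c+1-β)₊²)`, since on each side of `t` the integrand
is a truncated linear function with antiderivative `(·)₊²/2`. On the window `[t₀-1, t₁+1]` the
boundary terms vanish, so there `E` is a nonnegative combination of the profiles
`(t+1-c)₊² + (c+1-t)₊²`, which are strictly convex, decreasing left of `t` and increasing right
of it; hence `E` restricted to the window is minimized at a point of `[t₀, t₁]`. As an integral of
hinge functions `E` is convex on all of `ℝ`, so this interior minimizer is global, and strict
convexity around it excludes any other global minimizer.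
-/

open MeasureTheory

/-- Expected hinge loss of the threshold classifier `sign (x - c)` for a group with
uniform density `w` on `[α, β]` and true threshold `t`. -/
noncomputable def hingeExp (α β t w : ℝ) (c : ℝ) : ℝ :=
  ∫ x in Set.Icc α β, max 0 (1 - Real.sign (x - t) * (x - c)) * w

open Set Filter Topology

lemma IsMinOn.univ_of_antitoneOn_of_monotoneOn {α β : Type*} [LinearOrder α] [Preorder β]
    {g : α → β} {a b c : α} (hab : a ≤ b) (hmin : IsMinOn g (Icc a b) c)
    (ha : AntitoneOn g (Iic a)) (hb : MonotoneOn g (Ici b)) : IsMinOn g univ c := by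
  intro y _
  rcases lt_or_ge y a with hya | hay
  · exact (hmin ⟨le_rfl, hab⟩).trans (ha hya.le le_rfl hya.le)
  rcases le_or_gt y b with hyb | hby
  · exact hmin ⟨hay, hyb⟩
  · exact (hmin ⟨hab, le_rfl⟩).trans (hb le_rfl hby.le hby.le)

lemma StrictConvexOn.const_mul_add_const_mul {E : Type*} [AddCommMonoid E] [Module ℝ E]
    {s : Set E} {f g : E → ℝ} (hf : StrictConvexOn ℝ s f) (hg : StrictConvexOn ℝ s g)
    {a b : ℝ} (ha : 0 ≤ a) (hb : 0 ≤ b) (hab : 0 < a + b) :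
    StrictConvexOn ℝ s (fun x => a * f x + b * g x) := by
  refine ⟨hf.1, fun x hx y hy hxy p q hp hq hpq => ?_⟩
  have hfxy := hf.2 hx hy hxy hp hq hpq
  have hgxy := hg.2 hx hy hxy hp hq hpq
  simp only [smul_eq_mul] at hfxy hgxy ⊢
  rcases ha.eq_or_lt with rfl | ha
  · nlinarith
  · nlinarith

lemma ConvexOn.eq_of_isMinOn_of_strictConvexOn {E : Type*} [NormedAddCommGroup E]
    [NormedSpace ℝ E] {f : E → ℝ} {s : Set E} {x y : E} (hf : ConvexOn ℝ univ f)
    (hfs : StrictConvexOn ℝ s f) (hs : s ∈ 𝓝 x) (hx : IsMinOn f univ x)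
    (hy : IsMinOn f univ y) : y = x := by
  -- Points of the segment from `x` towards `y` near `x` lie in `s` and, by convexity, are global
  -- minimizers too; strict convexity on `s` allows only one.
  by_contra hyx
  have hseg : Tendsto (fun θ : ℝ => x + θ • (y - x)) (𝓝[>] 0) (𝓝 x) :=
    tendsto_nhdsWithin_of_tendsto_nhds <|
      (by fun_prop : Continuous fun θ : ℝ => x + θ • (y - x)).tendsto' 0 x (by simp)
  obtain ⟨θ, ⟨hθs, hθ1⟩, hθ0 : 0 < θ⟩ :=
    ((hseg.eventually_mem hs).and (Ioo_mem_nhdsGT one_pos)).and self_mem_nhdsWithin |>.exists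
  have hzmin : IsMinOn f univ (x + θ • (y - x)) := fun w _ => by
    have hcomb : x + θ • (y - x) = (1 - θ) • x + θ • y := by module
    calc f (x + θ • (y - x)) ≤ (1 - θ) • f x + θ • f y := by
          rw [hcomb]; exact hf.2 (mem_univ x) (mem_univ y) (by linarith [hθ1.2]) hθ0.le (by ring)
      _ ≤ (1 - θ) • f x + θ • f x := by gcongr; exact hy (mem_univ x)
      _ = f x := by module
      _ ≤ f w := hx (mem_univ w)
  have hzx := hfs.eq_of_isMinOn (hzmin.on_subset (subset_univ s)) (hx.on_subset (subset_univ s))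
    hθs (mem_of_mem_nhds hs)
  rw [add_eq_left, smul_eq_zero, sub_eq_zero] at hzx
  exact hzx.elim hθ0.ne' hyx

lemma ConvexOn.isMinOn_univ_of_eqOn {E : Type*} [NormedAddCommGroup E] [NormedSpace ℝ E]
    {f g : E → ℝ} {s : Set E} {x : E} (hf : ConvexOn ℝ univ f) (hfg : EqOn f g s)
    (hs : s ∈ 𝓝 x) (hg : IsMinOn g s x) : IsMinOn f univ x := by
  have hfs : IsMinOn f s x := fun z hz => show f x ≤ f z by
    rw [hfg hz, hfg (mem_of_mem_nhds hs)]; exact hg hz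
  exact fun y _ => IsMinOn.of_isLocalMin_of_convex_univ (hfs.isLocalMin hs) hf y

lemma hasDerivAt_max_zero_sq (x : ℝ) : HasDerivAt (fun y : ℝ => max 0 y ^ 2) (2 * max 0 x) x := by
  refine hasDerivAt_of_hasDerivAt_of_ne' (f := fun y : ℝ => max 0 y ^ 2)
    (g := fun y => 2 * max 0 y) (x := 0) (fun y hy => ?_) (by fun_prop) (by fun_prop) x
  rcases hy.lt_or_gt with hy | hy
  · have hzero : (fun y : ℝ => max 0 y ^ 2) =ᶠ[𝓝 y] fun _ => 0 := by
      filter_upwards [Iio_mem_nhds hy] with z hz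
      simp [max_eq_left (show z < 0 from hz).le]
    simpa [max_eq_left hy.le] using (hasDerivAt_const y (0 : ℝ)).congr_of_eventuallyEq hzero
  · have hsq : (fun y : ℝ => max 0 y ^ 2) =ᶠ[𝓝 y] fun y => y ^ 2 := by
      filter_upwards [Ioi_mem_nhds hy] with z hz
      rw [max_eq_right (show 0 < z from hz).le]
    simpa [max_eq_right hy.le] using (hasDerivAt_pow 2 y).congr_of_eventuallyEq hsq

lemma integral_max_zero_add (a b k : ℝ) :
    ∫ x in a..b, max 0 (x + k) = (max 0 (b + k) ^ 2 - max 0 (a + k) ^ 2) / 2 := by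
  have hderiv (x : ℝ) : HasDerivAt (fun y => max 0 (y + k) ^ 2 / 2) (max 0 (x + k)) x := by
    simpa using
      ((hasDerivAt_max_zero_sq (x + k)).comp x ((hasDerivAt_id x).add_const k)).div_const 2
  rw [intervalIntegral.integral_eq_sub_of_hasDerivAt (fun x _ => hderiv x)
    (by apply Continuous.intervalIntegrable; fun_prop)]
  ring

lemma integral_max_zero_sub (a b k : ℝ) :
    ∫ x in a..b, max 0 (k - x) = (max 0 (k - a) ^ 2 - max 0 (k - b) ^ 2) / 2 := by
  have h := intervalIntegral.integral_comp_neg (a := a) (b := b) (fun x => max 0 (x + k))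
  simp only [integral_max_zero_add, neg_add_eq_sub] at h
  rw [h]

@[fun_prop]
theorem Real.measurable_sign : Measurable Real.sign :=
  measurable_const.ite measurableSet_Iio (measurable_const.ite measurableSet_Ioi measurable_const)

theorem Real.abs_sign_le_one (r : ℝ) : |Real.sign r| ≤ 1 := by
  rcases Real.sign_apply_eq r with h | h | h <;> simp [h]

lemma integrableOn_hinge (α β t w c : ℝ) :
    IntegrableOn (fun x => max 0 (1 - Real.sign (x - t) * (x - c)) * w) (Icc α β) := by
  refine Integrable.mono' (g := fun x => (1 + |x - c|) * |w|)
    (Continuous.integrableOn_Icc (by fun_prop)) (by fun_prop) (Eventually.of_forall fun x => ?_)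
  have hsign : -(Real.sign (x - t) * (x - c)) ≤ |x - c| := by
    calc -(Real.sign (x - t) * (x - c)) ≤ |Real.sign (x - t) * (x - c)| := neg_le_abs _
      _ ≤ |x - c| := by
        rw [abs_mul]; exact mul_le_of_le_one_left (abs_nonneg _) (Real.abs_sign_le_one _)
  rw [norm_mul, Real.norm_of_nonneg (le_max_left _ _), Real.norm_eq_abs]
  gcongr
  exact max_le (by positivity) (by linarith)

lemma convexOn_max_zero_affine_mul (a b : ℝ) {w : ℝ} (hw : 0 ≤ w) :
    ConvexOn ℝ univ (fun c : ℝ => max 0 (a * c + b) * w) := by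
  refine ⟨convex_univ, fun x _ y _ p q hp hq hpq => ?_⟩
  have hcomb : a * (p * x + q * y) + b = p * (a * x + b) + q * (a * y + b) := by
    linear_combination b * hpq.symm
  simp only [smul_eq_mul]
  calc max 0 (a * (p * x + q * y) + b) * w
      ≤ (p * max 0 (a * x + b) + q * max 0 (a * y + b)) * w := by
        gcongr
        refine max_le (by positivity) ?_
        rw [hcomb]
        gcongr <;> exact le_max_right _ _
    _ = p * (max 0 (a * x + b) * w) + q * (max 0 (a * y + b) * w) := by ring

lemma convexOn_hingeExp (α β t : ℝ) {w : ℝ} (hw : 0 ≤ w) :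
    ConvexOn ℝ univ (hingeExp α β t w) := by
  refine integral_convexOn_of_integrand_ae convex_univ (Eventually.of_forall fun x => ?_)
    fun c _ => integrableOn_hinge α β t w c
  refine (convexOn_max_zero_affine_mul (Real.sign (x - t)) (1 - Real.sign (x - t) * x) hw).congr
    fun c _ => ?_
  ring_nf

noncomputable def hingeProfile (t c : ℝ) : ℝ := max 0 (t + 1 - c) ^ 2 + max 0 (c + 1 - t) ^ 2

lemma hingeExp_eq {α β t : ℝ} (w c : ℝ) (hαt : α ≤ t) (htβ : t ≤ β) :
    hingeExp α β t w c =
      w / 2 * (hingeProfile t c - max 0 (α + 1 - c) ^ 2 - max 0 (c + 1 - β) ^ 2) := by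
  set f := fun x => max 0 (1 - Real.sign (x - t) * (x - c)) * w
  have hleft : EqOn f (fun x => max 0 (x + (1 - c)) * w) (uIoo α t) := fun x hx => by
    rw [uIoo_of_le hαt] at hx
    simp only [f, Real.sign_of_neg (sub_neg.2 hx.2)]
    ring_nf
  have hright : EqOn f (fun x => max 0 (c + 1 - x) * w) (uIoo t β) := fun x hx => by
    rw [uIoo_of_le htβ] at hx
    simp only [f, Real.sign_of_pos (sub_pos.2 hx.1)]
    ring_nf
  have hf₁ : IntervalIntegrable f volume α t :=
    (Continuous.intervalIntegrable (by fun_prop) α t).congr_uIoo hleft.symm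
  have hf₂ : IntervalIntegrable f volume t β :=
    (Continuous.intervalIntegrable (by fun_prop) t β).congr_uIoo hright.symm
  rw [hingeExp, integral_Icc_eq_integral_Ioc, ← intervalIntegral.integral_of_le (hαt.trans htβ),
    ← intervalIntegral.integral_add_adjacent_intervals hf₁ hf₂,
    intervalIntegral.integral_congr_uIoo hleft, intervalIntegral.integral_congr_uIoo hright,
    intervalIntegral.integral_mul_const, intervalIntegral.integral_mul_const,
    integral_max_zero_add, integral_max_zero_sub, hingeProfile]
  simp only [← add_sub_assoc]
  ring

lemma hingeExp_eq_hingeProfile {α β t c : ℝ} (w : ℝ) (hαt : α ≤ t) (htβ : t ≤ β)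
    (hαc : α ≤ c - 1) (hcβ : c + 1 ≤ β) :
    hingeExp α β t w c = w / 2 * hingeProfile t c := by
  rw [hingeExp_eq w c hαt htβ, max_eq_left (by linarith), max_eq_left (by linarith)]
  ring

lemma continuous_hingeProfile (t : ℝ) : Continuous (hingeProfile t) := by
  unfold hingeProfile; fun_prop

lemma hasDerivAt_hingeProfile (t c : ℝ) :
    HasDerivAt (hingeProfile t) (2 * (max 0 (c + 1 - t) - max 0 (t + 1 - c))) c := by
  have h₁ := (hasDerivAt_max_zero_sq (t + 1 - c)).comp c ((hasDerivAt_id c).const_sub (t + 1))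
  have h₂ := (hasDerivAt_max_zero_sq (c + 1 - t)).comp c
    (((hasDerivAt_id c).add_const 1).sub_const t)
  exact (h₁.add h₂).congr_deriv (by ring)

lemma deriv_hingeProfile (t : ℝ) :
    deriv (hingeProfile t) = fun c => 2 * (max 0 (c + 1 - t) - max 0 (t + 1 - c)) :=
  funext fun c => (hasDerivAt_hingeProfile t c).deriv

lemma strictConvexOn_hingeProfile (t : ℝ) : StrictConvexOn ℝ univ (hingeProfile t) := by
  refine StrictMono.strictConvexOn_univ_of_deriv (continuous_hingeProfile t) ?_
  rw [deriv_hingeProfile]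
  intro a b hab
  simp only [max_def]
  split_ifs <;> linarith

lemma monotoneOn_hingeProfile (t : ℝ) : MonotoneOn (hingeProfile t) (Ici t) := by
  refine monotoneOn_of_deriv_nonneg (convex_Ici t) (continuous_hingeProfile t).continuousOn
    (fun c _ => (hasDerivAt_hingeProfile t c).differentiableAt.differentiableWithinAt) ?_
  intro c hc
  rw [interior_Ici, mem_Ioi] at hc
  rw [deriv_hingeProfile]
  have : max 0 (t + 1 - c) ≤ max 0 (c + 1 - t) := max_le_max le_rfl (by linarith)
  linarith

lemma antitoneOn_hingeProfile (t : ℝ) : AntitoneOn (hingeProfile t) (Iic t) := by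
  refine antitoneOn_of_deriv_nonpos (convex_Iic t) (continuous_hingeProfile t).continuousOn
    (fun c _ => (hasDerivAt_hingeProfile t c).differentiableAt.differentiableWithinAt) ?_
  intro c hc
  rw [interior_Iic, mem_Iio] at hc
  rw [deriv_hingeProfile]
  have : max 0 (c + 1 - t) ≤ max 0 (t + 1 - c) := max_le_max le_rfl (by linarith)
  linarith

lemma exists_mem_Icc_isMinOn_hingeProfile {t₀ t₁ a b : ℝ} (ht : t₀ ≤ t₁) (ha : 0 ≤ a)
    (hb : 0 ≤ b) :
    ∃ c ∈ Icc t₀ t₁, IsMinOn (fun z => a * hingeProfile t₀ z + b * hingeProfile t₁ z) univ c := by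
  have hcont : Continuous fun z => a * hingeProfile t₀ z + b * hingeProfile t₁ z :=
    ((continuous_hingeProfile t₀).const_mul a).add ((continuous_hingeProfile t₁).const_mul b)
  obtain ⟨c, hc, hmin⟩ := (isCompact_Icc : IsCompact (Icc t₀ t₁)).exists_isMinOn
    (nonempty_Icc.2 ht) hcont.continuousOn
  refine ⟨c, hc, hmin.univ_of_antitoneOn_of_monotoneOn ht (fun x hx y hy hxy => ?_)
    fun x hx y hy hxy => ?_⟩
  · have := antitoneOn_hingeProfile t₀ hx hy hxy
    have := antitoneOn_hingeProfile t₁ (Iic_subset_Iic.2 ht hx) (Iic_subset_Iic.2 ht hy) hxy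
    gcongr
  · have := monotoneOn_hingeProfile t₁ hx hy hxy
    have := monotoneOn_hingeProfile t₀ (Ici_subset_Ici.2 ht hx) (Ici_subset_Ici.2 ht hy) hxy
    gcongr

theorem stmt_15 (α₀ β₀ α₁ β₁ t₀ t₁ : ℝ)
    (h1 : α₀ + 1 < α₁ + 1) (h2 : α₁ + 1 < t₀ - 1) (h3 : t₀ + 1 < t₁ - 1)
    (h4 : t₁ + 1 < β₀ - 1) (h5 : β₀ - 1 < β₁ - 1) :
    ∀ lam ∈ Set.Icc (0:ℝ) 1,
      ∃ c, c ∈ Set.Icc t₀ t₁ ∧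
        (∀ y, lam * hingeExp α₀ β₀ t₀ (1 / (β₀ - α₀)) c
            + (1 - lam) * hingeExp α₁ β₁ t₁ (1 / (β₁ - α₁)) c
          ≤ lam * hingeExp α₀ β₀ t₀ (1 / (β₀ - α₀)) y
            + (1 - lam) * hingeExp α₁ β₁ t₁ (1 / (β₁ - α₁)) y) ∧
        (∀ c', (∀ y, lam * hingeExp α₀ β₀ t₀ (1 / (β₀ - α₀)) c'
            + (1 - lam) * hingeExp α₁ β₁ t₁ (1 / (β₁ - α₁)) c'
          ≤ lam * hingeExp α₀ β₀ t₀ (1 / (β₀ - α₀)) y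
            + (1 - lam) * hingeExp α₁ β₁ t₁ (1 / (β₁ - α₁)) y) → c' = c) := by
  rintro lam ⟨hl0, hl1⟩
  set w₀ := 1 / (β₀ - α₀)
  set w₁ := 1 / (β₁ - α₁)
  have hw₀ : 0 < w₀ := one_div_pos.2 (by linarith)
  have hw₁ : 0 < w₁ := one_div_pos.2 (by linarith)
  have ha : 0 ≤ lam * (w₀ / 2) := by positivity
  have hb : 0 ≤ (1 - lam) * (w₁ / 2) := mul_nonneg (sub_nonneg.2 hl1) (by positivity)
  set E := fun z => lam * hingeExp α₀ β₀ t₀ w₀ z + (1 - lam) * hingeExp α₁ β₁ t₁ w₁ z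
  set G := fun z => lam * (w₀ / 2) * hingeProfile t₀ z + (1 - lam) * (w₁ / 2) * hingeProfile t₁ z
  set K := Icc (t₀ - 1) (t₁ + 1)
  have hEG : EqOn E G K := fun z hz => by
    simp only [E, G, hingeExp_eq_hingeProfile _ (by linarith : α₀ ≤ t₀) (by linarith : t₀ ≤ β₀)
      (by linarith [hz.1] : α₀ ≤ z - 1) (by linarith [hz.2] : z + 1 ≤ β₀),
      hingeExp_eq_hingeProfile _ (by linarith : α₁ ≤ t₁) (by linarith : t₁ ≤ β₁)
      (by linarith [hz.1] : α₁ ≤ z - 1) (by linarith [hz.2] : z + 1 ≤ β₁)]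
    ring
  have hE : ConvexOn ℝ univ E :=
    ((convexOn_hingeExp α₀ β₀ t₀ hw₀.le).smul hl0).add
      ((convexOn_hingeExp α₁ β₁ t₁ hw₁.le).smul (sub_nonneg.2 hl1))
  have hG : StrictConvexOn ℝ K G :=
    ((strictConvexOn_hingeProfile t₀).const_mul_add_const_mul (strictConvexOn_hingeProfile t₁)
      ha hb (by rcases hl0.eq_or_lt with rfl | hl <;> nlinarith)).subset (subset_univ K)
      (convex_Icc _ _)
  obtain ⟨c, hc, hGmin⟩ := exists_mem_Icc_isMinOn_hingeProfile (by linarith : t₀ ≤ t₁) ha hb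
  have hK : K ∈ 𝓝 c := Icc_mem_nhds (by linarith [hc.1]) (by linarith [hc.2])
  have hEmin : IsMinOn E univ c :=
    hE.isMinOn_univ_of_eqOn hEG hK (hGmin.on_subset (subset_univ K))
  exact ⟨c, hc, fun y => hEmin (mem_univ y), fun c' hc' =>
    hE.eq_of_isMinOn_of_strictConvexOn (hG.congr hEG.symm) hK hEmin fun y _ => hc' y⟩
end

section
/- Let (a_i) be a real sequence such that |a_i − a_{i−1}| → 0, a_{i+1} > a_i whenever a_i ≤ L, and a_{i+1} < a_i whenever a_i > L, and suppose (a_i) neither stays ≤ L forever nor stays > L forever (i.e., it crosses L infinitely often in both directions). Then a_i → L. -/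
open Filter

theorem cross_aux (a : ℕ → ℝ) (L : ℝ) :
    ∀ j i, i ≤ j → a i ≤ L → L < a j → ∃ k, i ≤ k ∧ a k ≤ L ∧ L < a (k + 1) := by
  intro j
  induction j with
  | zero =>
    intro i hij hi hj
    interval_cases i
    exact absurd hj (not_lt.mpr hi)
  | succ j ih =>
    intro i hij hi hj
    rcases Nat.lt_or_ge i (j + 1) with h | h
    · have hij' : i ≤ j := Nat.lt_succ_iff.mp h
      by_cases hja : a j ≤ L
      · exact ⟨j, hij', hja, hj⟩
      · exact ih i hij' hi (lt_of_not_ge hja)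
    · have : i = j + 1 := le_antisymm hij h
      subst this
      exact absurd hj (not_lt.mpr hi)

theorem stmt_19 (a : ℕ → ℝ) (L : ℝ)
    (hstep : Tendsto (fun i : ℕ => |a (i + 1) - a i|) atTop (nhds 0))
    (hup : ∀ i : ℕ, a i ≤ L → a i < a (i + 1))
    (hdown : ∀ i : ℕ, L < a i → a (i + 1) < a i)
    (hbelow : ∀ N : ℕ, ∃ i, N ≤ i ∧ a i ≤ L)
    (habove : ∀ N : ℕ, ∃ i, N ≤ i ∧ L < a i) :
    Tendsto a atTop (nhds L) := by
  rw [Metric.tendsto_atTop]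
  intro ε hε
  have hε2 : (0:ℝ) < ε / 2 := by positivity
  obtain ⟨N, hN⟩ := (Metric.tendsto_atTop.mp hstep) (ε / 2) hε2
  have hstep' : ∀ i, N ≤ i → |a (i + 1) - a i| < ε / 2 := by
    intro i hi
    have := hN i hi
    simpa [Real.dist_eq] using this
  -- find k₀ ≥ N with a k₀ ∈ (L - ε/2, L + ε/2]
  obtain ⟨i₁, hi₁N, hi₁⟩ := hbelow N
  have hmem : ∃ k₀, N ≤ k₀ ∧ L - ε / 2 < a k₀ ∧ a k₀ ≤ L + ε / 2 := by
    by_cases hlo : L - ε / 2 < a i₁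
    · exact ⟨i₁, hi₁N, hlo, hi₁.trans (by linarith)⟩
    · obtain ⟨j, hji, hj⟩ := habove i₁
      obtain ⟨k, hik, hkle, hklt⟩ := cross_aux a L j i₁ hji hi₁ hj
      have hkN : N ≤ k := hi₁N.trans hik
      have hs := hstep' k hkN
      rw [abs_sub_lt_iff] at hs
      exact ⟨k + 1, hkN.trans (Nat.le_succ k), by linarith, by linarith⟩
  obtain ⟨k₀, hk₀N, hk₀lo, hk₀hi⟩ := hmem
  -- invariance
  have hinv : ∀ m, k₀ ≤ m → L - ε / 2 < a m ∧ a m ≤ L + ε / 2 := by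
    intro m hm
    induction m, hm using Nat.le_induction with
    | base => exact ⟨hk₀lo, hk₀hi⟩
    | succ m hm ih =>
      have hmN : N ≤ m := hk₀N.trans hm
      have hs := hstep' m hmN
      rw [abs_sub_lt_iff] at hs
      obtain ⟨ihl, ihr⟩ := ih
      by_cases h : a m ≤ L
      · have := hup m h
        constructor <;> linarith
      · have := hdown m (lt_of_not_ge h)
        constructor <;> linarith
  refine ⟨k₀, fun n hn => ?_⟩
  obtain ⟨h1, h2⟩ := hinv n hn
  rw [Real.dist_eq, abs_sub_lt_iff]
  constructor <;> linarith
end
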